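/- Define χ : 𝒪₂ⁿ × 𝒪₂ⁿ → {±1} by χ(j, i) = 1 if i = (a,b) with a < b and j(a) < j(b), and χ(j, i) = −1 if j(a) > j(b). Then χ is a rack 2-cocycle on the rack 𝒪₂ⁿ of transpositions of S_n under conjugation: χ(i, j▷k) χ(j,k) = χ(i▷j, i▷k) χ(i,k) for all transpositions i, j, k. -/

import Mathlib

/-!
Write `s(x, y) = ±1` according as `x < y` or `x > y`. For `c ≠ d` one has
`χ(σ, (c d)) = s(c, d) · s(σ c, σ d)`, a form symmetric in `c, d`. Since `σ (c d) σ⁻¹ = (σc σd)`,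
for `l = (e f)` both sides of the cocycle identity telescope, using `s² = 1`, to
`s(e, f) · s(i j e, i j f)`.
-/

open Equiv

variable {α : Type*} [LinearOrder α]

def orderSign (x y : α) : ℤ := if x < y then 1 else -1

lemma orderSign_mul_self (x y : α) : orderSign x y * orderSign x y = 1 := by
  unfold orderSign; split_ifs <;> norm_num

lemma orderSign_comm {x y : α} (h : x ≠ y) : orderSign y x = -orderSign x y := by
  rcases h.lt_or_gt with h | h <;> simp [orderSign, h, h.not_gt]

lemma apply_swap_eq_orderSign_mul (χ : Perm α → Perm α → ℤ)
    (hχ : ∀ (σ : Perm α) (a b : α), a < b → χ σ (swap a b) = orderSign (σ a) (σ b))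
    (σ : Perm α) {c d : α} (hcd : c ≠ d) :
    χ σ (swap c d) = orderSign c d * orderSign (σ c) (σ d) := by
  rcases hcd.lt_or_gt with h | h
  · simp [hχ σ c d h, orderSign, h]
  · rw [swap_comm, hχ σ d c h, orderSign_comm hcd.symm, orderSign_comm (σ.injective.ne hcd.symm),
      show orderSign d c = 1 from if_pos h]
    ring

theorem stmt11 (n : ℕ)
    (χ : Equiv.Perm (Fin n) → Equiv.Perm (Fin n) → ℤ)
    (hχ : ∀ (j : Equiv.Perm (Fin n)) (a b : Fin n), a < b →
      χ j (Equiv.swap a b) = if j a < j b then 1 else -1) :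
    ∀ i j l : Equiv.Perm (Fin n), i.IsSwap → j.IsSwap → l.IsSwap →
      χ i (j * l * j⁻¹) * χ j l = χ (i * j * i⁻¹) (i * l * i⁻¹) * χ i l := by
  rintro i j l - - ⟨e, f, hef, rfl⟩
  have hχ' := apply_swap_eq_orderSign_mul χ hχ
  rw [← swap_apply_apply, ← swap_apply_apply, hχ' _ (j.injective.ne hef),
    hχ' _ (i.injective.ne hef), hχ' _ hef, hχ' _ hef]
  simp only [Perm.mul_apply, Perm.inv_def, symm_apply_apply]
  linear_combination orderSign e f * orderSign (i (j e)) (i (j f)) *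
    (orderSign_mul_self (j e) (j f) - orderSign_mul_self (i e) (i f))
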